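/- Let A, A* be a Leonard pair in Mat_{d+1}(K) with A tridiagonal and A* diagonal, and suppose (θ_i, θ*_i, i=0..d; φ_j, φ'_j, j=1..d) is a parameter array with A*_{ii} = θ*_i, A_{ii} = θ_i + φ_i/(θ*_i - θ*_{i-1}) + φ_{i+1}/(θ*_i - θ*_{i+1}) (with φ_0 = φ_{d+1} = 0), and A_{i,i-1} A_{i-1,i} = φ_i φ'_i · [∏_{h=0}^{i-2}(θ*_{i-1}-θ*_h) / ∏_{h=0}^{i-1}(θ*_i-θ*_h)] · [∏_{h=i+1}^{d}(θ*_i-θ*_h) / ∏_{h=i}^{d}(θ*_{i-1}-θ*_h)]. Then (θ_{d-i}, θ*_i, i=0..d; φ'_j, φ_j, j=1..d) also satisfies these three conditions. -/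

import Mathlib

open Polynomial Matrix Finset

variable {K : Type*} [Field K]

/-- The primitive idempotent of `A` associated with eigenvalue `θ i`:
`E i = ∏_{j ≠ i} (A - θ j • 1) / (θ i - θ j)`. -/
noncomputable def primIdem {d : ℕ} (A : Matrix (Fin (d + 1)) (Fin (d + 1)) K)
    (θ : Fin (d + 1) → K) (i : Fin (d + 1)) : Matrix (Fin (d + 1)) (Fin (d + 1)) K :=
  Polynomial.aeval A
    (∏ j ∈ Finset.univ.erase i,
      (Polynomial.C (θ i - θ j)⁻¹ * (Polynomial.X - Polynomial.C (θ j))))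

/-- `A` is multiplicity-free with (distinct) eigenvalues `θ 0, …, θ d`. -/
def MultFreeWith {d : ℕ} (A : Matrix (Fin (d + 1)) (Fin (d + 1)) K)
    (θ : Fin (d + 1) → K) : Prop :=
  Function.Injective θ ∧ A.charpoly = ∏ i, (Polynomial.X - Polynomial.C (θ i))

/-- `θ` is an eigenvalue sequence for the (ordered) pair `A, B`: the corresponding
ordering of the primitive idempotents of `A` is an idempotent sequence for `A, B`. -/
def IsEigenvalueSeq {d : ℕ} (A B : Matrix (Fin (d + 1)) (Fin (d + 1)) K)
    (θ : Fin (d + 1) → K) : Prop :=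
  MultFreeWith A θ ∧
    ∀ i j : Fin (d + 1),
      (1 < |((i : ℕ) : ℤ) - ((j : ℕ) : ℤ)| → primIdem A θ i * B * primIdem A θ j = 0) ∧
      (|((i : ℕ) : ℤ) - ((j : ℕ) : ℤ)| = 1 → primIdem A θ i * B * primIdem A θ j ≠ 0)

/-- `A, B` is a Leonard pair in `Mat_{d+1}(K)`. -/
def IsLeonardPair {d : ℕ} (A B : Matrix (Fin (d + 1)) (Fin (d + 1)) K) : Prop :=
  (∃ θ, IsEigenvalueSeq A B θ) ∧ (∃ θs, IsEigenvalueSeq B A θs)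

/-- Every nonzero entry lies on the diagonal or the subdiagonal. -/
def LowerBidiagonal {K : Type*} [Field K] {d : ℕ}
    (A : Matrix (Fin (d + 1)) (Fin (d + 1)) K) : Prop :=
  ∀ i j : Fin (d + 1), (i : ℕ) ≠ (j : ℕ) → (i : ℕ) ≠ (j : ℕ) + 1 → A i j = 0

/-- Every nonzero entry lies on the diagonal or the superdiagonal. -/
def UpperBidiagonal {K : Type*} [Field K] {d : ℕ}
    (A : Matrix (Fin (d + 1)) (Fin (d + 1)) K) : Prop :=
  ∀ i j : Fin (d + 1), (i : ℕ) ≠ (j : ℕ) → (j : ℕ) ≠ (i : ℕ) + 1 → A i j = 0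

/-- Every nonzero entry lies on the diagonal, subdiagonal, or superdiagonal. -/
def Tridiagonal {K : Type*} [Field K] {d : ℕ}
    (A : Matrix (Fin (d + 1)) (Fin (d + 1)) K) : Prop :=
  ∀ i j : Fin (d + 1), 1 < |((i : ℕ) : ℤ) - ((j : ℕ) : ℤ)| → A i j = 0

/-- A parameter array of diameter `d` over `K`:
scalars `θ 0,…,θ d`, `θs 0,…,θs d`, `φ 1,…,φ d`, `φp 1,…,φp d`
satisfying conditions (i)–(v) of the classification theorem. -/
def IsParameterArray (K : Type*) [Field K] (d : ℕ) (θ θs φ φp : ℕ → K) : Prop :=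
  (∀ i, 1 ≤ i → i ≤ d → φ i ≠ 0 ∧ φp i ≠ 0) ∧
  (∀ i j, i ≤ d → j ≤ d → i ≠ j → θ i ≠ θ j ∧ θs i ≠ θs j) ∧
  (∀ i, 1 ≤ i → i ≤ d →
    φ i = φp 1 * (∑ h ∈ Finset.range i, (θ h - θ (d - h)) / (θ 0 - θ d))
      + (θs i - θs 0) * (θ (i - 1) - θ d)) ∧
  (∀ i, 1 ≤ i → i ≤ d →
    φp i = φ 1 * (∑ h ∈ Finset.range i, (θ h - θ (d - h)) / (θ 0 - θ d))
      + (θs i - θs 0) * (θ (d - i + 1) - θ 0)) ∧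
  (∃ β : K, ∀ i, 2 ≤ i → i + 1 ≤ d →
    (θ (i - 2) - θ (i + 1)) / (θ (i - 1) - θ i) = β ∧
    (θs (i - 2) - θs (i + 1)) / (θs (i - 1) - θs i) = β)



/-- Telescoped form of the β-recurrence. -/
lemma tdd_lemS (d : ℕ) (θ : ℕ → K) (β : K)
    (hrec : ∀ j, 1 ≤ j → j + 2 ≤ d → β * (θ j - θ (j+1)) = θ (j-1) - θ (j+2)) :
    ∀ k m, 1 ≤ m → m + k + 1 ≤ d →
      β * (θ m - θ (m+k)) =
        (θ (m-1) - θ (m+k-1)) + (θ m - θ (m+k)) + (θ (m+1) - θ (m+k+1)) := by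
  intro k
  induction k with
  | zero =>
      intro m hm hmd
      simp
  | succ k ih =>
      intro m hm hmd
      have h1 := ih m hm (by omega)
      have h2 := hrec (m+k) (by omega) (by omega)
      have e2 : m + (k+1) - 1 = m + k := by omega
      have e3 : m + k + 1 - 1 = m + k := by omega
      have e4 : m + k - 1 + 1 = m + k := by omega
      have e5 : m + (k+1) = m + k + 1 := by omega
      have e6 : m + k + 1 + 1 = m + k + 2 := by omega
      rw [e2, e5, e6]
      linear_combination h1 + h2

/-- The sequence `p ↦ θ p - θ (d-p)` satisfies the same three-term recurrence. -/
lemma tdd_recA (d : ℕ) (θ : ℕ → K) (β : K)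
    (hrec : ∀ j, 1 ≤ j → j + 2 ≤ d → β * (θ j - θ (j+1)) = θ (j-1) - θ (j+2)) :
    ∀ p, p + 3 ≤ d →
      β * (θ (p+1) - θ (d-(p+1))) =
        (θ p - θ (d-p)) + (θ (p+1) - θ (d-(p+1))) + (θ (p+2) - θ (d-(p+2))) := by
  intro p hp
  by_cases hc : 2*p + 2 ≤ d
  · have hS := tdd_lemS d θ β hrec (d - 2*p - 2) (p+1) (by omega) (by omega)
    have e1 : p + 1 + (d - 2*p - 2) = d - (p+1) := by omega
    have e2 : p + 1 - 1 = p := by omega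
    have e3 : d - (p+1) - 1 = d - (p+2) := by omega
    have e4 : p + 1 + 1 = p + 2 := by omega
    have e5 : d - (p+1) + 1 = d - p := by omega
    rw [e1, e2, e3, e4, e5] at hS
    linear_combination hS
  · have hS := tdd_lemS d θ β hrec (2*p + 2 - d) (d - (p+1)) (by omega) (by omega)
    have e1 : d - (p+1) + (2*p + 2 - d) = p + 1 := by omega
    have e2 : d - (p+1) - 1 = d - (p+2) := by omega
    have e3 : p + 1 - 1 = p := by omega
    have e4 : d - (p+1) + 1 = d - p := by omega
    have e5 : p + 1 + 1 = p + 2 := by omega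
    rw [e1, e2, e3, e4, e5] at hS
    linear_combination -hS

/-- Shift invariance of the Casoratian-type bilinear form. -/
lemma tdd_shiftX (d : ℕ) (β : K) (A V : ℕ → K)
    (hA : ∀ p, p + 3 ≤ d → β * A (p+1) = A p + A (p+1) + A (p+2))
    (hV : ∀ p, p + 3 ≤ d → β * V (p+1) = V p + V (p+1) + V (p+2)) :
    ∀ n q, q + n + 2 ≤ d →
      A (q+1+n) * V (q+1) - V (q+1+n) * A (q+1) = A (q+n) * V q - V (q+n) * A q := by
  intro n
  induction n using Nat.strong_induction_on with
  | _ n ih =>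
    match n with
    | 0 =>
        intro q h
        ring
    | 1 =>
        intro q h
        have ha := hA q (by omega)
        have hv := hV q (by omega)
        have e1 : q + 1 + 1 = q + 2 := by omega
        rw [e1]
        linear_combination A (q+1) * hv - V (q+1) * ha
    | (n+2) =>
        intro q h
        have h1 := ih (n+1) (by omega) q (by omega)
        have h2 := ih n (by omega) q (by omega)
        have ha1 := hA (q+n+1) (by omega)
        have hv1 := hV (q+n+1) (by omega)
        have ha2 := hA (q+n) (by omega)
        have hv2 := hV (q+n) (by omega)
        have e1 : q + 1 + (n+2) = q + n + 3 := by omega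
        have e2 : q + (n+2) = q + n + 2 := by omega
        have e3 : q + 1 + (n+1) = q + n + 2 := by omega
        have e4 : q + (n+1) = q + n + 1 := by omega
        have e5 : q + 1 + n = q + n + 1 := by omega
        have e6 : q + n + 1 + 1 = q + n + 2 := by omega
        have e7 : q + n + 1 + 2 = q + n + 3 := by omega
        have e8 : q + n + 2 = q + n + 2 := rfl
        rw [e1, e2]
        rw [e3, e4] at h1
        rw [e5] at h2
        rw [e6, e7] at ha1
        rw [e6, e7] at hv1
        have e9 : q + n + 0 + 1 = q + n + 1 := by omega
        rw [e9] at ha2 hv2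
        have e10 : q + n + 0 + 2 = q + n + 2 := by omega
        rw [e10] at ha2 hv2
        linear_combination (A (q+1) * hv1 - V (q+1) * ha1) + (V q * ha2 - A q * hv2) + (β - 1) * h1 - h2

lemma tdd_gapX (d : ℕ) (β : K) (A V : ℕ → K)
    (hA : ∀ p, p + 3 ≤ d → β * A (p+1) = A p + A (p+1) + A (p+2))
    (hV : ∀ p, p + 3 ≤ d → β * V (p+1) = V p + V (p+1) + V (p+2)) :
    ∀ h i, h ≤ i → i + 1 ≤ d →
      A i * V h - V i * A h = A (i-h) * V 0 - V (i-h) * A 0 := by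
  intro h
  induction h with
  | zero => intro i _ _; simp
  | succ h ih =>
      intro i hhi hid
      have hs := tdd_shiftX d β A V hA hV (i - h - 1) h (by omega)
      have e1 : h + 1 + (i - h - 1) = i := by omega
      have e2 : h + (i - h - 1) = i - 1 := by omega
      rw [e1, e2] at hs
      have := ih (i-1) (by omega) (by omega)
      have e3 : i - 1 - h = i - (h+1) := by omega
      rw [e3] at this
      rw [hs, this]

lemma tdd_sum_cross (d : ℕ) (β : K) (A V : ℕ → K)
    (hA : ∀ p, p + 3 ≤ d → β * A (p+1) = A p + A (p+1) + A (p+2))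
    (hV : ∀ p, p + 3 ≤ d → β * V (p+1) = V p + V (p+1) + V (p+2)) :
    ∀ i, 1 ≤ i → i ≤ d →
      (V (i-1) + V 0) * ∑ p ∈ Finset.range i, A p
        = (∑ p ∈ Finset.range i, V p) * (A (i-1) + A 0) := by
  intro i h1 h2
  rw [← sub_eq_zero, Finset.mul_sum, Finset.sum_mul, ← Finset.sum_sub_distrib]
  have hterm : ∀ p ∈ Finset.range i,
      (V (i-1) + V 0) * A p - V p * (A (i-1) + A 0)
        = (A p * V 0 - V p * A 0) - (A (i-1-p) * V 0 - V (i-1-p) * A 0) := by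
    intro p hp
    rw [Finset.mem_range] at hp
    have hg := tdd_gapX d β A V hA hV p (i-1) (by omega) (by omega)
    linear_combination -hg
  rw [Finset.sum_congr rfl hterm, Finset.sum_sub_distrib,
    Finset.sum_range_reflect (fun p => A p * V 0 - V p * A 0) i, sub_self]

lemma tdd_key (d : ℕ) (hd : 1 ≤ d) (θ θs φ φp : ℕ → K)
    (hpa : IsParameterArray K d θ θs φ φp) (i : ℕ) (h1 : 1 ≤ i) (h2 : i ≤ d) :
    φ i = φp i + (θs i - θs (i-1)) * ∑ p ∈ Finset.range i, (θ p - θ (d-p)) := by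
  obtain ⟨hnz, hdist, h3, h4, β, hβ⟩ := hpa
  have hrecθ : ∀ j, 1 ≤ j → j + 2 ≤ d → β * (θ j - θ (j+1)) = θ (j-1) - θ (j+2) := by
    intro j hj hjd
    have h := (hβ (j+1) (by omega) (by omega)).1
    have hne : θ j ≠ θ (j+1) := (hdist j (j+1) (by omega) (by omega) (by omega)).1
    have e1 : j + 1 - 2 = j - 1 := by omega
    have e2 : j + 1 - 1 = j := by omega
    have e3 : j + 1 + 1 = j + 2 := by omega
    rw [e1, e2, e3] at h
    rw [div_eq_iff (sub_ne_zero.mpr hne)] at h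
    exact h.symm
  have hrecθs : ∀ j, 1 ≤ j → j + 2 ≤ d → β * (θs j - θs (j+1)) = θs (j-1) - θs (j+2) := by
    intro j hj hjd
    have h := (hβ (j+1) (by omega) (by omega)).2
    have hne : θs j ≠ θs (j+1) := (hdist j (j+1) (by omega) (by omega) (by omega)).2
    have e1 : j + 1 - 2 = j - 1 := by omega
    have e2 : j + 1 - 1 = j := by omega
    have e3 : j + 1 + 1 = j + 2 := by omega
    rw [e1, e2, e3] at h
    rw [div_eq_iff (sub_ne_zero.mpr hne)] at h
    exact h.symm
  have hA := tdd_recA d θ β hrecθ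
  have hV : ∀ p, p + 3 ≤ d →
      β * (θs (p+1+1) - θs (p+1)) =
        (θs (p+1) - θs p) + (θs (p+1+1) - θs (p+1)) + (θs (p+2+1) - θs (p+2)) := by
    intro p hp
    have h := hrecθs (p+1) (by omega) (by omega)
    have e1 : p + 1 - 1 = p := by omega
    have e2 : p + 1 + 1 = p + 2 := by omega
    have e3 : p + 1 + 2 = p + 3 := by omega
    rw [e1, e2, e3] at h
    have e4 : p + 2 + 1 = p + 3 := by omega
    rw [e2, e4]
    linear_combination -h
  have SC := tdd_sum_cross d β (fun p => θ p - θ (d - p)) (fun p => θs (p+1) - θs p)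
      (fun p hp => hA p hp) (fun p hp => hV p hp) i h1 h2
  beta_reduce at SC
  have e1 : i - 1 + 1 = i := by omega
  have e2 : (0:ℕ) + 1 = 1 := by omega
  rw [e1, e2] at SC
  simp only [Nat.sub_zero] at SC
  have hb : ∑ p ∈ Finset.range i, (θs (p+1) - θs p) = θs i - θs 0 :=
    Finset.sum_range_sub θs i
  rw [hb] at SC
  have hne0d : θ 0 - θ d ≠ 0 :=
    sub_ne_zero.mpr (hdist 0 d (by omega) le_rfl (by omega)).1
  have h3i := h3 i h1 h2
  have h4i := h4 i h1 h2
  rw [← Finset.sum_div] at h3i h4i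
  have e3 : d - i + 1 = d - (i-1) := by omega
  rw [e3] at h4i
  have h31 := h3 1 le_rfl hd
  rw [Finset.sum_range_one] at h31
  simp only [Nat.sub_zero, Nat.sub_self] at h31
  rw [div_self hne0d, mul_one] at h31
  have hdiv : (θ 0 - θ d) * ((∑ p ∈ Finset.range i, (θ p - θ (d-p))) / (θ 0 - θ d))
      = ∑ p ∈ Finset.range i, (θ p - θ (d-p)) := by
    field_simp
  linear_combination h3i - h4i - SC
    - ((∑ p ∈ Finset.range i, (θ p - θ (d-p))) / (θ 0 - θ d)) * h31
    - (θs 1 - θs 0) * hdiv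

theorem tdd_scalar {d : ℕ} (hd : 1 ≤ d)
    (θ θs φ φp : ℕ → K)
    (hpa : IsParameterArray K d θ θs φ φp)
    (hφ0 : φ 0 = 0) (hφd1 : φ (d + 1) = 0)
    (hφp0 : φp 0 = 0) (hφpd1 : φp (d + 1) = 0) :
    ∀ n : ℕ, n ≤ d →
      θ n + φ n / (θs n - θs (n - 1)) + φ (n + 1) / (θs n - θs (n + 1)) =
      θ (d - n) + φp n / (θs n - θs (n - 1)) + φp (n + 1) / (θs n - θs (n + 1)) := by
  intro n hnd
  have hdist := hpa.2.1
  rcases Nat.eq_zero_or_pos n with h0 | h1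
  · rw [h0, hφ0, hφp0]
    simp only [zero_div, Nat.sub_zero, Nat.zero_add, zero_add, add_zero]
    have key1 := tdd_key d hd θ θs φ φp hpa 1 le_rfl hd
    rw [Finset.sum_range_one] at key1
    simp only [Nat.sub_zero, Nat.sub_self] at key1
    have hs01 : θs 0 - θs 1 ≠ 0 :=
      sub_ne_zero.mpr (hdist 0 1 (by omega) hd (by omega)).2
    rw [key1, add_div]
    have e : (θs 1 - θs 0) * (θ 0 - θ d) / (θs 0 - θs 1) = θ d - θ 0 := by
      rw [div_eq_iff hs01]; ring
    rw [e]
    ring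
  · have hlo : θs n - θs (n - 1) ≠ 0 :=
      sub_ne_zero.mpr (hdist n (n - 1) hnd (by omega) (by omega)).2
    have keyn := tdd_key d hd θ θs φ φp hpa n h1 hnd
    rcases eq_or_lt_of_le hnd with hcase | hcase
    · have hTd : (∑ p ∈ Finset.range d, (θ p - θ (d - p))) = θ 0 - θ d := by
        have href : ∑ p ∈ Finset.range d, θ (d - (d - 1 - p)) = ∑ p ∈ Finset.range d, θ (d - p) :=
          Finset.sum_range_reflect (fun p => θ (d - p)) d
        have hcong : ∑ p ∈ Finset.range d, θ (d - (d - 1 - p)) = ∑ p ∈ Finset.range d, θ (p + 1) :=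
          Finset.sum_congr rfl (fun p hp => by
            rw [Finset.mem_range] at hp; congr 1; omega)
        calc ∑ p ∈ Finset.range d, (θ p - θ (d - p))
            = ∑ p ∈ Finset.range d, (θ p - θ (p + 1)) := by
              rw [Finset.sum_sub_distrib, Finset.sum_sub_distrib, ← href, hcong]
          _ = θ 0 - θ d := Finset.sum_range_sub' θ d
      rw [hcase] at keyn hlo ⊢
      rw [hTd] at keyn
      rw [hφd1, hφpd1, zero_div, add_zero, add_zero, keyn]
      simp only [Nat.sub_self]
      rw [add_div, mul_div_cancel_left₀ _ hlo]
      ring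
    · have hup : θs n - θs (n + 1) ≠ 0 :=
        sub_ne_zero.mpr (hdist n (n + 1) hnd (by omega) (by omega)).2
      have keyn1 := tdd_key d hd θ θs φ φp hpa (n + 1) (by omega) hcase
      have e1 : n + 1 - 1 = n := by omega
      rw [e1] at keyn1
      have hTs : (∑ p ∈ Finset.range (n + 1), (θ p - θ (d - p)))
          = (∑ p ∈ Finset.range n, (θ p - θ (d - p))) + (θ n - θ (d - n)) :=
        Finset.sum_range_succ _ n
      rw [keyn, keyn1, hTs]
      rw [add_div, mul_div_cancel_left₀ _ hlo, add_div]
      have e2 : (θs (n + 1) - θs n) * ((∑ p ∈ Finset.range n, (θ p - θ (d - p))) + (θ n - θ (d - n)))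
            / (θs n - θs (n + 1))
          = -((∑ p ∈ Finset.range n, (θ p - θ (d - p))) + (θ n - θ (d - n))) := by
        rw [div_eq_iff hup]; ring
      rw [e2]
      ring

/-- the three entry conditions of the TD-D criterion are preserved
under the second inversion `(θ_{d-i}, θ*_i; φ'_j, φ_j)` of the parameter array. -/
theorem tdd_conditions_second_inversion {d : ℕ} (hd : 1 ≤ d)
    (A Astar : Matrix (Fin (d + 1)) (Fin (d + 1)) K)
    (hLP : IsLeonardPair A Astar)
    (hTD : Tridiagonal A) (hD : Astar.IsDiag)
    (θ θs φ φp : ℕ → K)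
    (hpa : IsParameterArray K d θ θs φ φp)
    (hφ0 : φ 0 = 0) (hφd1 : φ (d + 1) = 0)
    (hφp0 : φp 0 = 0) (hφpd1 : φp (d + 1) = 0)
    (hths : ∀ i : Fin (d + 1), Astar i i = θs (i : ℕ))
    (hdiag : ∀ i : Fin (d + 1), A i i =
      θ (i : ℕ) + φ (i : ℕ) / (θs (i : ℕ) - θs ((i : ℕ) - 1))
        + φ ((i : ℕ) + 1) / (θs (i : ℕ) - θs ((i : ℕ) + 1)))
    (hcross : ∀ i : ℕ, ∀ _ : 1 ≤ i, ∀ _ : i ≤ d,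
      A ⟨i, by omega⟩ ⟨i - 1, by omega⟩ * A ⟨i - 1, by omega⟩ ⟨i, by omega⟩ =
        φ i * φp i *
          ((∏ h ∈ Finset.range (i - 1), (θs (i - 1) - θs h)) /
            (∏ h ∈ Finset.range i, (θs i - θs h))) *
          ((∏ h ∈ Finset.Icc (i + 1) d, (θs i - θs h)) /
            (∏ h ∈ Finset.Icc i d, (θs (i - 1) - θs h)))) :
    (∀ i : Fin (d + 1), Astar i i = θs (i : ℕ)) ∧
    (∀ i : Fin (d + 1), A i i =
      θ (d - (i : ℕ)) + φp (i : ℕ) / (θs (i : ℕ) - θs ((i : ℕ) - 1))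
        + φp ((i : ℕ) + 1) / (θs (i : ℕ) - θs ((i : ℕ) + 1))) ∧
    (∀ i : ℕ, ∀ _ : 1 ≤ i, ∀ _ : i ≤ d,
      A ⟨i, by omega⟩ ⟨i - 1, by omega⟩ * A ⟨i - 1, by omega⟩ ⟨i, by omega⟩ =
        φp i * φ i *
          ((∏ h ∈ Finset.range (i - 1), (θs (i - 1) - θs h)) /
            (∏ h ∈ Finset.range i, (θs i - θs h))) *
          ((∏ h ∈ Finset.Icc (i + 1) d, (θs i - θs h)) /
            (∏ h ∈ Finset.Icc i d, (θs (i - 1) - θs h)))) := by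
  refine ⟨hths, ?_, ?_⟩
  · intro i
    rw [hdiag i]
    have hnd : (i : ℕ) ≤ d := by have := i.isLt; omega
    exact tdd_scalar hd θ θs φ φp hpa hφ0 hφd1 hφp0 hφpd1 (i : ℕ) hnd
  · intro i hi1 hi2
    rw [hcross i hi1 hi2]
    ring
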